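/- arXiv:2605.28891 — 2 statements merged into one kernel-verified Lean document; each statement's English description precedes it below -/
import Mathlib

section
/- In the Heisenberg group ℂ × ℝ with law (ζ,v) ∗ (ξ,t) = (ζ+ξ, v+t+2Im(ζ·conj(ξ))), the function ν(p,q) = |p⁻¹ ∗ q|, where |(ζ,v)| = ||ζ|² − i·v|^{1/2}, defines a metric (the Cygan metric): ν is symmetric, nonnegative, vanishes exactly on the diagonal, and satisfies the triangle inequality. -/
/-- The Heisenberg group law on `ℂ × ℝ`. -/
def heisMul (p q : ℂ × ℝ) : ℂ × ℝ :=
  (p.1 + q.1, p.2 + q.2 + 2 * (p.1 * (starRingEnd ℂ) q.1).im)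

/-- Inverse in the Heisenberg group. -/
def heisInv (p : ℂ × ℝ) : ℂ × ℝ := (-p.1, -p.2)

/-- The Heisenberg norm `|(ζ,v)| = ‖ |ζ|² - i v ‖ ^ (1/2)`. -/
noncomputable def heisNorm (p : ℂ × ℝ) : ℝ :=
  Real.sqrt ‖(((‖p.1‖ : ℝ) ^ 2 : ℂ) - p.2 * Complex.I)‖

/-- The Cygan metric `ν(p,q) = |p⁻¹ ∗ q|`. -/
noncomputable def cygan (p q : ℂ × ℝ) : ℝ := heisNorm (heisMul (heisInv p) q)

/-!
Put `A(ζ,v) = |ζ|² - i v ∈ ℂ`, so that `|p|² = |A(p)|`. The group law is designed so that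
`A(p ∗ q) = A(p) + A(q) + 2 conj(ζ) ξ`, and `Re A(p) = |ζ|²` gives `|ζ| ≤ |p|`; hence
`|A(p ∗ q)| ≤ |p|² + |q|² + 2 |p| |q|`, i.e. `|p ∗ q| ≤ |p| + |q|`. The triangle inequality follows
from `(p⁻¹ ∗ q) ∗ (q⁻¹ ∗ r) = p⁻¹ ∗ r`, and symmetry from `A(p⁻¹) = conj A(p)` together with
`(p⁻¹ ∗ q)⁻¹ = q⁻¹ ∗ p`.
-/

open Complex ComplexConjugate

noncomputable def heisGauge (p : ℂ × ℝ) : ℂ := ((‖p.1‖ : ℝ) ^ 2 : ℂ) - p.2 * I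

lemma heisNorm_eq_sqrt_norm_heisGauge (p : ℂ × ℝ) : heisNorm p = √‖heisGauge p‖ := rfl

@[simp] lemma heisGauge_re (p : ℂ × ℝ) : (heisGauge p).re = ‖p.1‖ ^ 2 := by
  simp [heisGauge, ← ofReal_pow]

@[simp] lemma heisGauge_im (p : ℂ × ℝ) : (heisGauge p).im = -p.2 := by
  simp [heisGauge, ← ofReal_pow]

lemma heisGauge_heisMul (p q : ℂ × ℝ) :
    heisGauge (heisMul p q) = heisGauge p + heisGauge q + 2 * (conj p.1 * q.1) := by
  apply Complex.ext <;>
    simp [heisMul, Complex.sq_norm, normSq_apply, mul_re, mul_im] <;> ring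

lemma heisGauge_heisInv (p : ℂ × ℝ) : heisGauge (heisInv p) = conj (heisGauge p) := by
  apply Complex.ext <;> simp [heisInv]

lemma heisGauge_eq_zero_iff (p : ℂ × ℝ) : heisGauge p = 0 ↔ p = (0, 0) := by
  simp [Complex.ext_iff, Prod.ext_iff]

lemma sq_norm_fst_le_norm_heisGauge (p : ℂ × ℝ) : ‖p.1‖ ^ 2 ≤ ‖heisGauge p‖ := by
  simpa using re_le_norm (heisGauge p)

lemma heisNorm_nonneg (p : ℂ × ℝ) : 0 ≤ heisNorm p := Real.sqrt_nonneg _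

lemma sq_heisNorm (p : ℂ × ℝ) : heisNorm p ^ 2 = ‖heisGauge p‖ :=
  Real.sq_sqrt (norm_nonneg _)

lemma norm_fst_le_heisNorm (p : ℂ × ℝ) : ‖p.1‖ ≤ heisNorm p :=
  Real.le_sqrt_of_sq_le (sq_norm_fst_le_norm_heisGauge p)

lemma heisNorm_heisInv (p : ℂ × ℝ) : heisNorm (heisInv p) = heisNorm p := by
  rw [heisNorm_eq_sqrt_norm_heisGauge, heisGauge_heisInv, norm_conj]; rfl

lemma heisNorm_eq_zero_iff (p : ℂ × ℝ) : heisNorm p = 0 ↔ p = (0, 0) := by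
  rw [heisNorm_eq_sqrt_norm_heisGauge, Real.sqrt_eq_zero (norm_nonneg _), norm_eq_zero,
    heisGauge_eq_zero_iff]

lemma heisNorm_heisMul_le (p q : ℂ × ℝ) :
    heisNorm (heisMul p q) ≤ heisNorm p + heisNorm q := by
  refine Real.sqrt_le_iff.2 ⟨add_nonneg (heisNorm_nonneg p) (heisNorm_nonneg q), ?_⟩
  have hcross : ‖p.1‖ * ‖q.1‖ ≤ heisNorm p * heisNorm q :=
    mul_le_mul (norm_fst_le_heisNorm p) (norm_fst_le_heisNorm q) (norm_nonneg _)
      (heisNorm_nonneg p)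
  calc ‖heisGauge (heisMul p q)‖
      ≤ ‖heisGauge p‖ + ‖heisGauge q‖ + 2 * (‖p.1‖ * ‖q.1‖) := by
        rw [heisGauge_heisMul]
        refine (norm_add_le _ _).trans (add_le_add (norm_add_le _ _) ?_)
        simp
    _ ≤ (heisNorm p + heisNorm q) ^ 2 := by
        rw [← sq_heisNorm p, ← sq_heisNorm q]; nlinarith

lemma heisInv_heisMul_heisInv (p q : ℂ × ℝ) :
    heisInv (heisMul (heisInv p) q) = heisMul (heisInv q) p := by
  simp only [heisMul, heisInv, Prod.mk.injEq]
  refine ⟨by ring, ?_⟩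
  simp only [mul_im, conj_re, conj_im, neg_re, neg_im]
  ring

lemma heisMul_heisInv_heisMul_heisInv (p q r : ℂ × ℝ) :
    heisMul (heisMul (heisInv p) q) (heisMul (heisInv q) r) = heisMul (heisInv p) r := by
  simp only [heisMul, heisInv, Prod.mk.injEq]
  refine ⟨by ring, ?_⟩
  simp only [mul_im, add_re, add_im, neg_re, neg_im, conj_re, conj_im]
  ring

lemma heisMul_heisInv_eq_zero_iff (p q : ℂ × ℝ) : heisMul (heisInv p) q = (0, 0) ↔ p = q := by
  have him : ∀ z : ℂ, (-z * conj z).im = 0 := fun z => by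
    rw [neg_mul, neg_im, mul_conj, ofReal_im, neg_zero]
  simp only [heisMul, heisInv, Prod.ext_iff]
  constructor
  · rintro ⟨h1, h2⟩
    have h1' : q.1 = p.1 := by linear_combination h1
    rw [h1', him] at h2
    exact ⟨h1'.symm, by linarith⟩
  · rintro ⟨h1, h2⟩
    rw [h1, h2, him]
    exact ⟨neg_add_cancel _, by ring⟩

/-- The Cygan metric is a metric on the Heisenberg group: symmetric, nonnegative,
vanishing exactly on the diagonal, and satisfying the triangle inequality. -/
theorem stmt2 :
    (∀ p q : ℂ × ℝ, cygan p q = cygan q p) ∧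
    (∀ p q : ℂ × ℝ, 0 ≤ cygan p q) ∧
    (∀ p q : ℂ × ℝ, cygan p q = 0 ↔ p = q) ∧
    (∀ p q r : ℂ × ℝ, cygan p r ≤ cygan p q + cygan q r) := by
  refine ⟨fun p q => ?_, fun p q => heisNorm_nonneg _, fun p q => ?_, fun p q r => ?_⟩
  · rw [cygan, cygan, ← heisNorm_heisInv, heisInv_heisMul_heisInv]
  · rw [cygan, heisNorm_eq_zero_iff, heisMul_heisInv_eq_zero_iff]
  · rw [cygan, cygan, cygan, ← heisMul_heisInv_heisMul_heisInv p q r]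
    exact heisNorm_heisMul_le _ _
end

section
/- For a δ-hyperbolic geodesic metric space X with basepoint o, a point p ∈ ∂X, and an isometry g of X fixing p, the limit B(g) = lim_{n→∞} β_p(gⁿ(o), o)/n exists and satisfies |β_p(g(o), o) − B(g)| ≤ K(δ), where β_p is the Busemann function at p and K(δ) is a constant depending only on δ. Moreover, |B(g)| ≤ N(g), the stable norm of g; in particular, if g is parabolic (N(g)=0) then |β_p(g(o), o)| ≤ K(δ). -/
open Filter

private lemma sub_le_mul {s : ℕ → ℝ} (hs : Subadditive s) :
    ∀ n : ℕ, 1 ≤ n → s n ≤ n * s 1 := by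
  intro n hn
  induction n, hn using Nat.le_induction with
  | base => simp
  | succ n hn ih =>
    calc s (n + 1) ≤ s n + s 1 := hs n 1
    _ ≤ n * s 1 + s 1 := by linarith
    _ = (↑(n + 1) : ℝ) * s 1 := by push_cast; ring

/-- For an isometry `g` of `X` fixing a boundary point `p`, with `b = β_p` the Busemann
function at `p` (satisfying the almost-cocycle property with constant `K = K(δ)` and
invariance under `g`), the limit `B(g) = lim β_p(gⁿ(o), o)/n` exists and satisfies
`|β_p(g(o), o) − B(g)| ≤ K(δ)` and `|B(g)| ≤ N(g)`, where `N(g)` is the stable norm of `g`.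
In particular, if `g` is parabolic (`N(g) = 0`), then `|β_p(g(o), o)| ≤ K(δ)`. -/
theorem stmt4 {X : Type*} [MetricSpace X] (b : X → X → ℝ) (K : ℝ) (hK : 0 ≤ K)
    (hcoc : ∀ x y w : X, |b x y - b x w - b w y| ≤ K)
    (hbd : ∀ x y w w' : X, |b x y - b w w'| ≤ dist x w + dist y w' + K)
    (g : X ≃ᵢ X) (hinv : ∀ x y : X, b (g x) (g y) = b x y)
    (o : X) (N : ℝ)
    (hN : Tendsto (fun n : ℕ => dist o ((⇑g)^[n] o) / n) atTop (nhds N)) :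
    ∃ B : ℝ,
      Tendsto (fun n : ℕ => b ((⇑g)^[n] o) o / n) atTop (nhds B) ∧
      |b (g o) o - B| ≤ K ∧ |B| ≤ N ∧ (N = 0 → |b (g o) o| ≤ K) := by
  set a : ℕ → ℝ := fun n => b ((⇑g)^[n] o) o with ha
  -- iterated invariance
  have hinvn : ∀ (n : ℕ) (x y : X), b ((⇑g)^[n] x) ((⇑g)^[n] y) = b x y := by
    intro n
    induction n with
    | zero => simp
    | succ n ih => intro x y; rw [Function.iterate_succ_apply', Function.iterate_succ_apply',
        hinv, ih]
  -- almost additivity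
  have key : ∀ m n : ℕ, |a (m + n) - a m - a n| ≤ K := by
    intro m n
    have h1 := hcoc ((⇑g)^[m + n] o) o ((⇑g)^[n] o)
    have h2 : (⇑g)^[m + n] o = (⇑g)^[n] ((⇑g)^[m] o) := by
      rw [Nat.add_comm, Function.iterate_add_apply]
    have h3 : b ((⇑g)^[m + n] o) ((⇑g)^[n] o) = a m := by
      rw [h2, hinvn]
    rw [h3] at h1
    exact h1
  have hu : Subadditive (fun n => a n + K) := by
    intro m n
    have := key m n
    have := abs_le.mp this
    dsimp only
    linarith [this.1, this.2]
  have hv : Subadditive (fun n => -a n + K) := by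
    intro m n
    have := abs_le.mp (key m n)
    dsimp only
    linarith [this.1, this.2]
  have hvle := sub_le_mul hv
  have hule := sub_le_mul hu
  -- lower bound on a n / n for n ≥ 1
  have hlow : ∀ n : ℕ, 1 ≤ n → a 1 - K ≤ a n / n := by
    intro n hn
    have h := hvle n hn
    have hn' : (0 : ℝ) < n := by exact_mod_cast hn
    rw [le_div_iff₀ hn']
    nlinarith [hK, h]
  have hhigh : ∀ n : ℕ, 1 ≤ n → a n / n ≤ a 1 + K := by
    intro n hn
    have h := hule n hn
    have hn' : (0 : ℝ) < n := by exact_mod_cast hn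
    rw [div_le_iff₀ hn']
    nlinarith [hK, h]
  have hbdd : BddBelow (Set.range fun n : ℕ => (a n + K) / n) := by
    refine ⟨min 0 (a 1 - K), ?_⟩
    rintro x ⟨n, rfl⟩
    rcases Nat.eq_zero_or_pos n with rfl | hn
    · simp
    · have hn' : (0 : ℝ) < n := by exact_mod_cast hn
      have := hlow n hn
      have : a 1 - K ≤ (a n + K) / n := by
        rw [le_div_iff₀ hn'] at this ⊢
        nlinarith [hK]
      exact le_trans (min_le_right _ _) this
  have htu := hu.tendsto_lim hbdd
  set B := hu.lim with hB
  have hKn : Tendsto (fun n : ℕ => K / (n : ℝ)) atTop (nhds 0) :=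
    tendsto_const_nhds.div_atTop tendsto_natCast_atTop_atTop
  have hta : Tendsto (fun n : ℕ => a n / n) atTop (nhds B) := by
    have : Tendsto (fun n : ℕ => (a n + K) / n - K / n) atTop (nhds (B - 0)) :=
      htu.sub hKn
    rw [sub_zero] at this
    refine this.congr (fun n => ?_)
    ring
  have h1 : B ≤ a 1 + K := by
    refine le_of_tendsto hta ?_
    filter_upwards [eventually_ge_atTop 1] with n hn using hhigh n hn
  have h2 : a 1 - K ≤ B := by
    refine ge_of_tendsto hta ?_
    filter_upwards [eventually_ge_atTop 1] with n hn using hlow n hn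
  have ha1 : a 1 = b (g o) o := by simp [ha]
  have hdiff : |b (g o) o - B| ≤ K := by
    rw [← ha1, abs_le]; constructor <;> linarith
  have habsB : |B| ≤ N := by
    have hboo : |b o o| ≤ K := by
      have := hcoc o o o
      rw [show b o o - b o o - b o o = -(b o o) by ring, abs_neg] at this
      exact this
    have habs : ∀ n : ℕ, 1 ≤ n →
        |a n / n| ≤ dist o ((⇑g)^[n] o) / n + 2 * K / n := by
      intro n hn
      have hn' : (0 : ℝ) < n := by exact_mod_cast hn
      have h1 : |a n - b o o| ≤ dist ((⇑g)^[n] o) o + dist o o + K :=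
        hbd ((⇑g)^[n] o) o o o
      rw [dist_self, dist_comm] at h1
      have h2 : |a n| ≤ dist o ((⇑g)^[n] o) + 2 * K := by
        calc |a n| = |(a n - b o o) + b o o| := by congr 1; ring
          _ ≤ |a n - b o o| + |b o o| := abs_add_le _ _
          _ ≤ dist o ((⇑g)^[n] o) + 2 * K := by linarith
      rw [abs_div, abs_of_pos hn']
      calc |a n| / (n : ℝ) ≤ (dist o ((⇑g)^[n] o) + 2 * K) / n := by gcongr
        _ = dist o ((⇑g)^[n] o) / n + 2 * K / n := by ring
    have htabs : Tendsto (fun n : ℕ => |a n / n|) atTop (nhds |B|) :=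
      hta.abs
    have htN : Tendsto (fun n : ℕ => dist o ((⇑g)^[n] o) / n + 2 * K / n) atTop
        (nhds (N + 0)) := by
      refine hN.add ?_
      exact tendsto_const_nhds.div_atTop tendsto_natCast_atTop_atTop
    rw [add_zero] at htN
    refine le_of_tendsto_of_tendsto htabs htN ?_
    filter_upwards [eventually_ge_atTop 1] with n hn using habs n hn
  refine ⟨B, hta, hdiff, habsB, fun hN0 => ?_⟩
  calc |b (g o) o| = |(b (g o) o - B) + B| := by congr 1; ring
    _ ≤ |b (g o) o - B| + |B| := abs_add_le _ _
    _ ≤ K + 0 := by rw [← hN0]; exact add_le_add hdiff habsB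
    _ = K := add_zero K
end
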